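/- arXiv:2307.01272 — 4 statements merged into one kernel-verified Lean document; each statement's English description precedes it below -/
import Mathlib

section
/- For all integers n ≥ 0 and all odd integers t ≥ 1, the number of t-colored overpartitions of 8n+2 is divisible by 4, i.e., p̄_{-t}(8n+2) ≡ 0 (mod 4). -/
open scoped Classical

/-- The infinite product `∏_{k ≥ 0} f k` of formal power series, in the situation where,
for each fixed power of `q`, only finitely many factors contribute: the coefficient of
`q^n` is read off from the product of the factors `f 0, …, f n` (all later factors are
assumed to be `1 + O(q^{n+1})`). -/
noncomputable def seriesProd (f : ℕ → PowerSeries ℤ) : PowerSeries ℤ :=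
  PowerSeries.mk fun n => PowerSeries.coeff n (∏ k ∈ Finset.range (n + 1), f k)

/-- The generating function `∏_{k ≥ 1} (1 - q^{2k})^t / (1 - q^k)^{2t}`
for `t`-colored overpartitions. -/
noncomputable def overGF (t : ℕ) : PowerSeries ℤ :=
  seriesProd fun k =>
    (1 - (PowerSeries.X : PowerSeries ℤ) ^ (2 * (k + 1))) ^ t *
      (PowerSeries.invOfUnit (1 - (PowerSeries.X : PowerSeries ℤ) ^ (k + 1)) 1) ^ (2 * t)

/-- `p̄_{-t}(n)`, the number of `t`-colored overpartitions of `n`: the coefficient of `q^n`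
in `∏_{k ≥ 1} (1 - q^{2k})^t / (1 - q^k)^{2t}`. -/
noncomputable def pbar (t n : ℕ) : ℤ :=
  PowerSeries.coeff n (overGF t)

/-- Ramanujan's theta function `φ(q^m) = 1 + 2 ∑_{k ≥ 1} q^{m k²}`. -/
noncomputable def phi (m : ℕ) : PowerSeries ℤ :=
  PowerSeries.mk fun n =>
    if n = 0 then 1 else if ∃ k : ℕ, 0 < k ∧ n = m * k ^ 2 then 2 else 0

/-- `φ(-q) = 1 + 2 ∑_{k ≥ 1} (-1)^{k²} q^{k²}` (note `(-1)^{k²} = (-1)^n` at `n = k²`). -/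
noncomputable def phiNeg : PowerSeries ℤ :=
  PowerSeries.mk fun n =>
    if n = 0 then 1 else if ∃ k : ℕ, 0 < k ∧ n = k ^ 2 then 2 * (-1) ^ n else 0

/-- Ramanujan's theta function `ψ(q^m) = ∑_{k ≥ 0} q^{m·k(k+1)/2}`. -/
noncomputable def psi (m : ℕ) : PowerSeries ℤ :=
  PowerSeries.mk fun n => if ∃ k : ℕ, 2 * n = m * (k * (k + 1)) then 1 else 0

/-- `f_r = ∏_{j ≥ 1} (1 - q^{r j})`. -/
noncomputable def fr (r : ℕ) : PowerSeries ℤ :=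
  seriesProd fun j => 1 - (PowerSeries.X : PowerSeries ℤ) ^ (r * (j + 1))

/-!
Modulo 4 each factor of the generating function is `(1 + q^m)^t / (1 - q^m)^t = 1 + 2q^m/(1 - q^m)`
for odd `t`, and since `2a · 2b ≡ 0` the product of these factors is
`1 + 2 ∑_m q^m/(1 - q^m) = 1 + 2 ∑_N d(N) q^N`. Hence `p̄_{-t}(N) ≡ 2 d(N) (mod 4)`, and
`d(8n + 2) = d(2) d(4n + 1)` is even.
-/

open PowerSeries Finset

section FourEqZero

variable {R : Type*} [CommRing R]

lemma one_add_two_mul_sq_of_four_eq_zero (h4 : (4 : R) = 0) (a : R) : (1 + 2 * a) ^ 2 = 1 := by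
  linear_combination (1 + a) * a * h4

lemma one_add_two_mul_pow_of_odd (h4 : (4 : R) = 0) (a : R) {t : ℕ} (ht : Odd t) :
    (1 + 2 * a) ^ t = 1 + 2 * a := by
  obtain ⟨j, rfl⟩ := ht
  rw [pow_succ, pow_mul, one_add_two_mul_sq_of_four_eq_zero h4, one_pow, one_mul]

lemma prod_one_add_two_mul_of_four_eq_zero {ι : Type*} (h4 : (4 : R) = 0) (s : Finset ι)
    (a : ι → R) : ∏ i ∈ s, (1 + 2 * a i) = 1 + 2 * ∑ i ∈ s, a i := by
  classical
  induction s using Finset.induction_on with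
  | empty => simp
  | insert i s hi ih =>
    rw [prod_insert hi, sum_insert hi, ih]
    linear_combination a i * (∑ j ∈ s, a j) * h4

/-- `(1 - y²) / (1 - y)² = (1 + y) / (1 - y) = 1 + 2y / (1 - y)`, and `1 + 2a` is an involution
modulo 4. -/
lemma one_sub_sq_pow_mul_pow_of_four_eq_zero (h4 : (4 : R) = 0) {y s : R} (hs : (1 - y) * s = 1)
    {t : ℕ} (ht : Odd t) : (1 - y ^ 2) ^ t * s ^ (2 * t) = 1 + 2 * (y * s) := by
  have hfactor : (1 - y ^ 2) * s ^ 2 = 1 + 2 * (y * s) := by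
    linear_combination (1 + y * s + s) * hs
  rw [pow_mul, ← mul_pow, hfactor, one_add_two_mul_pow_of_odd h4 _ ht]

end FourEqZero

lemma four_eq_zero_powerSeries_zmod : (4 : (ZMod 4)⟦X⟧) = 0 := by
  rw [← map_ofNat (C (R := ZMod 4)) 4, show (OfNat.ofNat 4 : ZMod 4) = 0 from rfl, map_zero]

def lambertTerm (R : Type*) [Semiring R] (m : ℕ) : R⟦X⟧ :=
  mk fun n => if 0 < n ∧ m ∣ n then 1 else 0

lemma one_sub_X_pow_mul_lambertTerm {R : Type*} [Ring R] {m : ℕ} (hm : 0 < m) :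
    (1 - X ^ m) * lambertTerm R m = X ^ m := by
  ext n
  rw [sub_mul, one_mul, map_sub, coeff_X_pow_mul', coeff_X_pow]
  simp only [lambertTerm, coeff_mk]
  have hsub : m ∣ n - m ↔ m ∣ n ∨ n ≤ m := Nat.dvd_sub_self_right
  have hle : 0 < n → m ∣ n → m ≤ n := Nat.le_of_dvd
  by_cases hd : m ∣ n <;> split_ifs <;> simp_all
  omega

lemma card_filter_succ_dvd_range (N : ℕ) (hN : N ≠ 0) :
    #{k ∈ range (N + 1) | k + 1 ∣ N} = #N.divisors := by
  apply card_nbij' (· + 1) (· - 1) <;> intro k hk <;> simp_all [Nat.mem_divisors]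
  all_goals
    have hk1 : 0 < k := Nat.pos_of_dvd_of_pos hk (Nat.pos_of_ne_zero hN)
    simp only [Nat.sub_add_cancel hk1]
  exact ⟨(Nat.le_of_dvd (Nat.pos_of_ne_zero hN) hk).trans N.le_succ, hk⟩

lemma map_overGF_factor {t : ℕ} (ht : Odd t) {m : ℕ} (hm : 0 < m) :
    map (Int.castRingHom (ZMod 4))
        ((1 - X ^ (2 * m)) ^ t * invOfUnit (1 - X ^ m) 1 ^ (2 * t)) =
      1 + 2 * lambertTerm (ZMod 4) m := by
  set s := map (Int.castRingHom (ZMod 4)) (invOfUnit (1 - X ^ m) 1)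
  have hunit : constantCoeff (1 - X ^ m : ℤ⟦X⟧) = ((1 : ℤˣ) : ℤ) := by
    simp [hm.ne']
  have hs : (1 - X ^ m) * s = 1 := by
    have h := congrArg (map (Int.castRingHom (ZMod 4))) (mul_invOfUnit _ _ hunit)
    rwa [map_mul, map_sub, map_one, map_pow, map_X] at h
  have hL := one_sub_X_pow_mul_lambertTerm (R := ZMod 4) hm
  rw [map_mul, map_pow, map_pow, map_sub, map_one, map_pow, map_X, pow_mul' X,
    one_sub_sq_pow_mul_pow_of_four_eq_zero four_eq_zero_powerSeries_zmod hs ht]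
  linear_combination 2 * lambertTerm (ZMod 4) m * hs - 2 * s * hL

lemma coeff_seriesProd (f : ℕ → ℤ⟦X⟧) (n : ℕ) :
    coeff n (seriesProd f) = coeff n (∏ k ∈ range (n + 1), f k) :=
  coeff_mk _ _

lemma intCast_pbar {t : ℕ} (ht : Odd t) {N : ℕ} (hN : N ≠ 0) :
    (pbar t N : ZMod 4) = 2 * #N.divisors := by
  rw [pbar, overGF, coeff_seriesProd, ← eq_intCast (Int.castRingHom _), ← coeff_map, map_prod,
    prod_congr rfl fun k _ => map_overGF_factor ht k.succ_pos,
    prod_one_add_two_mul_of_four_eq_zero four_eq_zero_powerSeries_zmod]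
  rw [← map_ofNat C 2, map_add, coeff_C_mul, map_sum, coeff_one, if_neg hN, zero_add]
  simp only [lambertTerm, coeff_mk, Nat.pos_of_ne_zero hN, true_and]
  rw [sum_boole, card_filter_succ_dvd_range N hN]

theorem four_dvd_pbar_of_even_card_divisors {t : ℕ} (ht : Odd t) {N : ℕ} (hN : N ≠ 0)
    (hdiv : Even #N.divisors) : (4 : ℤ) ∣ pbar t N := by
  refine (ZMod.intCast_zmod_eq_zero_iff_dvd _ 4).mp ?_
  obtain ⟨j, hj⟩ := hdiv
  rw [intCast_pbar ht hN, hj]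
  push_cast
  linear_combination (j : ZMod 4) * ZMod.natCast_self 4

lemma even_card_divisors_two_mul {m : ℕ} (hm : Odd m) : Even #(2 * m).divisors := by
  rw [(Nat.coprime_two_left.mpr hm).card_divisors_mul, Nat.prime_two.divisors]
  exact even_two.mul_right _

theorem pbar_eight_n_add_2_general (t : ℕ) (ht : Odd t) (n : ℕ) :
    (4 : ℤ) ∣ pbar t (8 * n + 2) := by
  have hsplit : 8 * n + 2 = 2 * (4 * n + 1) := by ring
  refine four_dvd_pbar_of_even_card_divisors ht (by omega) ?_
  rw [hsplit]
  exact even_card_divisors_two_mul ⟨2 * n, by ring⟩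

/-- For all `n ≥ 0` and all odd `t ≥ 1`, `p̄_{-t}(8n+2) ≡ 0 (mod 4)`. -/
theorem pbar_eight_n_add_2 (t : ℕ) (ht1 : 1 ≤ t) (ht : Odd t) (n : ℕ) :
    (4 : ℤ) ∣ pbar t (8 * n + 2) :=
  pbar_eight_n_add_2_general t ht n
end

section
/- For all integers n ≥ 0 and all odd integers t ≥ 1, the number of t-colored overpartitions of 8n+5 is divisible by 8, i.e., p̄_{-t}(8n+5) ≡ 0 (mod 8). -/
open scoped Classical

/-!
The generating function of `t`-colored overpartitions is `G ^ t` with `G = f₂ / f₁²`. Gauss's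
identity `φ(-q) = f₁² / f₂`, obtained from the finite Jacobi triple product at `z = -1` by
letting the Gaussian binomials tend to `1 / (q²; q²)_∞`, says `G * (1 + 2B) = 1` for
`B = ∑_{k ≥ 1} (-1)^k q^{k²}`. Modulo `8` this forces
`G^(2s+1) ≡ 1 - 2B + 4((s+1)B² - sB)`. At the odd non-square `8n + 5` the coefficient of `B`
is `0` and that of `B²` is even (the products `b_i b_j` and `b_j b_i` pair off), so the
coefficient of `G ^ t` vanishes modulo `8`.
-/

open Finset

section PowerSeriesCongruence

open PowerSeries

variable {R : Type*} [CommRing R] {A B : R⟦X⟧} {m : ℕ}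

theorem smodEq_X_pow_iff :
    A ≡ B [SMOD Ideal.span {X ^ m}] ↔ ∀ N < m, coeff N A = coeff N B := by
  simp only [SModEq.sub_mem, Ideal.mem_span_singleton, X_pow_dvd_iff, map_sub, sub_eq_zero]

theorem SModEq.of_X_pow_le {m' : ℕ} (h : A ≡ B [SMOD Ideal.span {X ^ m'}]) (hm : m ≤ m') :
    A ≡ B [SMOD Ideal.span {X ^ m}] :=
  h.mono (Ideal.span_singleton_le_span_singleton.2 (pow_dvd_pow X hm))

theorem eq_of_forall_smodEq_X_pow (h : ∀ m, A ≡ B [SMOD Ideal.span {X ^ m}]) : A = B :=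
  ext fun N => smodEq_X_pow_iff.1 (h (N + 1)) N N.lt_succ_self

theorem X_pow_mul_smodEq (h : A ≡ 1 [SMOD Ideal.span {X ^ m}]) (e : ℕ) :
    X ^ e * A ≡ X ^ e [SMOD Ideal.span {X ^ (e + m)}] := by
  rw [SModEq.sub_mem, Ideal.mem_span_singleton] at h ⊢
  rw [← mul_sub_one, pow_add]
  exact mul_dvd_mul_left _ h

theorem one_sub_X_pow_smodEq_one {e : ℕ} (h : m ≤ e) :
    (1 - X ^ e : R⟦X⟧) ≡ 1 [SMOD Ideal.span {X ^ m}] := by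
  rw [SModEq.sub_mem, Ideal.mem_span_singleton, sub_sub_cancel_left, dvd_neg]
  exact pow_dvd_pow X h

theorem prod_one_sub_X_pow_smodEq_one {ι : Type*} {s : Finset ι} {e : ι → ℕ}
    (h : ∀ i ∈ s, m ≤ e i) :
    ∏ i ∈ s, (1 - X ^ e i : R⟦X⟧) ≡ 1 [SMOD Ideal.span {X ^ m}] := by
  simpa using SModEq.prod fun i hi => one_sub_X_pow_smodEq_one (R := R) (h i hi)

theorem one_sub_X_pow_mul_invOfUnit {e : ℕ} (he : e ≠ 0) :
    (1 - X ^ e : R⟦X⟧) * invOfUnit (1 - X ^ e) 1 = 1 :=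
  mul_invOfUnit _ _ (by simp [he])

theorem invOfUnit_one_sub_X_pow_smodEq_one {e : ℕ} (he : e ≠ 0) :
    invOfUnit (1 - X ^ e : R⟦X⟧) 1 ≡ 1 [SMOD Ideal.span {X ^ e}] := by
  rw [SModEq.sub_mem, Ideal.mem_span_singleton]
  exact ⟨_, by linear_combination one_sub_X_pow_mul_invOfUnit (R := R) he⟩

theorem coeff_ofNat_mul (c : ℕ) [c.AtLeastTwo] (N : ℕ) (f : R⟦X⟧) :
    coeff N (OfNat.ofNat c * f) = OfNat.ofNat c * coeff N f := by
  rw [← map_ofNat C, coeff_C_mul]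

end PowerSeriesCongruence

section InfiniteProduct

open PowerSeries

/-- The factors for which `seriesProd f` is the infinite product `∏ f k`: every coefficient of
the partial products stabilises. -/
def ConvergentFactors (f : ℕ → ℤ⟦X⟧) : Prop :=
  ∀ k, f k ≡ 1 [SMOD Ideal.span {X ^ (k + 1)}]

variable {f g : ℕ → ℤ⟦X⟧}

theorem ConvergentFactors.mul (hf : ConvergentFactors f) (hg : ConvergentFactors g) :
    ConvergentFactors fun k => f k * g k :=
  fun k => by simpa using (hf k).mul (hg k)

theorem ConvergentFactors.pow (hf : ConvergentFactors f) (t : ℕ) :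
    ConvergentFactors fun k => f k ^ t :=
  fun k => by simpa using (hf k).pow t

theorem ConvergentFactors.one_sub_X_pow {e : ℕ → ℕ} (he : ∀ k, k + 1 ≤ e k) :
    ConvergentFactors fun k => 1 - X ^ e k :=
  fun k => one_sub_X_pow_smodEq_one (he k)

theorem convergentFactors_fr {r : ℕ} (hr : 0 < r) :
    ConvergentFactors fun k => 1 - X ^ (r * (k + 1)) :=
  ConvergentFactors.one_sub_X_pow fun _ => Nat.le_mul_of_pos_left _ hr

theorem prod_range_smodEq_prod_range (hf : ConvergentFactors f) {n m : ℕ} (hnm : n ≤ m) :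
    ∏ k ∈ range m, f k ≡ ∏ k ∈ range n, f k [SMOD Ideal.span {X ^ n}] := by
  rw [← prod_range_mul_prod_Ico f hnm]
  simpa using SModEq.rfl.mul
    (SModEq.prod fun k hk => (hf k).of_X_pow_le (by simp at hk; omega) (m := n))

theorem seriesProd_smodEq_prod (hf : ConvergentFactors f) (m : ℕ) :
    seriesProd f ≡ ∏ k ∈ range m, f k [SMOD Ideal.span {X ^ m}] := by
  refine smodEq_X_pow_iff.2 fun N hN => ?_
  rw [seriesProd, coeff_mk]
  exact smodEq_X_pow_iff.1 (prod_range_smodEq_prod_range hf hN).symm N N.lt_succ_self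

theorem seriesProd_mul (hf : ConvergentFactors f) (hg : ConvergentFactors g) :
    seriesProd f * seriesProd g = seriesProd fun k => f k * g k := by
  refine eq_of_forall_smodEq_X_pow fun m => ?_
  have h := (seriesProd_smodEq_prod hf m).mul (seriesProd_smodEq_prod hg m)
  rw [← prod_mul_distrib] at h
  exact h.trans (seriesProd_smodEq_prod (hf.mul hg) m).symm

theorem seriesProd_pow (hf : ConvergentFactors f) (t : ℕ) :
    seriesProd f ^ t = seriesProd fun k => f k ^ t := by
  refine eq_of_forall_smodEq_X_pow fun m => ?_
  have h := (seriesProd_smodEq_prod hf m).pow t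
  rw [← prod_pow] at h
  exact h.trans (seriesProd_smodEq_prod (hf.pow t) m).symm

theorem prod_range_two_mul {M : Type*} [CommMonoid M] (v : ℕ → M) (m : ℕ) :
    ∏ j ∈ range (2 * m), v j = ∏ k ∈ range m, (v (2 * k) * v (2 * k + 1)) := by
  induction m with
  | zero => simp
  | succ m ih => rw [mul_add_one, prod_range_succ, prod_range_succ, ih, prod_range_succ, mul_assoc]

theorem seriesProd_pair (hf : ConvergentFactors f) :
    seriesProd (fun k => f (2 * k) * f (2 * k + 1)) = seriesProd f := by
  have hpair : ConvergentFactors fun k => f (2 * k) * f (2 * k + 1) :=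
    fun k => by simpa using ((hf _).of_X_pow_le (by omega)).mul ((hf _).of_X_pow_le (by omega))
  refine eq_of_forall_smodEq_X_pow fun m => ?_
  have h := seriesProd_smodEq_prod hf (2 * m)
  rw [prod_range_two_mul] at h
  exact (seriesProd_smodEq_prod hpair m).trans (h.of_X_pow_le (by omega)).symm

end InfiniteProduct

section QBinomial

variable {R : Type*} [CommRing R] (x : R)

def qBinomial : ℕ → ℕ → R
  | _, 0 => 1
  | 0, _ + 1 => 0
  | n + 1, k + 1 => x ^ (k + 1) * qBinomial n (k + 1) + qBinomial n k

@[simp] theorem qBinomial_zero_right (n : ℕ) : qBinomial x n 0 = 1 := by cases n <;> rfl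

@[simp] theorem qBinomial_zero_succ (k : ℕ) : qBinomial x 0 (k + 1) = 0 := rfl

theorem qBinomial_succ_succ (n k : ℕ) :
    qBinomial x (n + 1) (k + 1) = x ^ (k + 1) * qBinomial x n (k + 1) + qBinomial x n k := rfl

theorem qBinomial_eq_zero_of_lt : ∀ {n k : ℕ}, n < k → qBinomial x n k = 0
  | 0, _ + 1, _ => rfl
  | n + 1, k + 1, h => by
    rw [qBinomial_succ_succ, qBinomial_eq_zero_of_lt (by omega),
      qBinomial_eq_zero_of_lt (by omega), mul_zero, add_zero]

@[simp] theorem qBinomial_self (n : ℕ) : qBinomial x n n = 1 := by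
  induction n with
  | zero => rfl
  | succ n ih =>
    rw [qBinomial_succ_succ, qBinomial_eq_zero_of_lt x n.lt_succ_self, ih, mul_zero, zero_add]

theorem qBinomial_succ_succ' (n k : ℕ) :
    qBinomial x (n + 1) (k + 1) = qBinomial x n (k + 1) + x ^ (n - k) * qBinomial x n k := by
  induction n generalizing k with
  | zero => cases k <;> simp [qBinomial_succ_succ]
  | succ n ih =>
    rcases k with _ | k
    · have h0 := ih 0
      simp only [qBinomial_succ_succ, qBinomial_zero_right, Nat.sub_zero] at h0 ⊢
      linear_combination x * h0
    rw [Nat.add_sub_add_right]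
    rcases lt_or_ge n (k + 1) with h | h
    · simp [qBinomial_succ_succ, qBinomial_eq_zero_of_lt x h,
        qBinomial_eq_zero_of_lt x (h.trans (k + 1).lt_succ_self),
        Nat.sub_eq_zero_of_le (Nat.lt_succ_iff.1 h)]
    have hexp : x ^ (k + 2) * x ^ (n - (k + 1)) = x ^ (n - k) * x ^ (k + 1) := by
      rw [← pow_add, ← pow_add]; congr 1; omega
    linear_combination qBinomial_succ_succ x (n + 1) (k + 1) + x ^ (k + 2) * ih (k + 1) + ih k
      - qBinomial_succ_succ x n (k + 1) - x ^ (n - k) * qBinomial_succ_succ x n k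
      + qBinomial x n (k + 1) * hexp

theorem qBinomial_add_mul_prod (m k : ℕ) :
    qBinomial x (m + k) k * ∏ i ∈ range k, (1 - x ^ (i + 1)) =
      ∏ i ∈ range k, (1 - x ^ (m + i + 1)) := by
  induction k generalizing m with
  | zero => simp
  | succ k ihk =>
    induction m with
    | zero => simp
    | succ m ihm =>
      have hpeel : ∏ i ∈ range (k + 1), (1 - x ^ (m + i + 1)) =
          (1 - x ^ (m + 1)) * ∏ i ∈ range k, (1 - x ^ (m + 1 + i + 1)) := by
        rw [prod_range_succ', mul_comm]; congr 2 with i; ring_nf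
      have hk := ihk (m + 1)
      rw [show m + 1 + k = m + (k + 1) by omega] at hk
      rw [prod_range_succ, hpeel] at ihm
      rw [show m + 1 + (k + 1) = m + (k + 1) + 1 by omega, qBinomial_succ_succ, prod_range_succ,
        prod_range_succ]
      linear_combination x ^ (k + 1) * ihm + (1 - x ^ (k + 1)) * hk

end QBinomial

def sqDist (n j : ℕ) : ℕ := ((j : ℤ) - n).natAbs ^ 2

@[simp, push_cast]
theorem natCast_sqDist (n j : ℕ) : (sqDist n j : ℤ) = ((j : ℤ) - n) ^ 2 := by
  simp [sqDist]

section JacobiTripleProduct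

open Polynomial

variable {R : Type*} [CommRing R] {a : R}

theorem coeff_mul_one_add_C_mul_X_succ (p : R[X]) (c : R) (j : ℕ) :
    (p * (1 + C c * X)).coeff (j + 1) = p.coeff (j + 1) + p.coeff j * c := by
  rw [mul_add, mul_one, coeff_add, ← mul_assoc, coeff_mul_X, coeff_mul_C]

theorem coeff_mul_C_add_X_succ (p : R[X]) (c : R) (j : ℕ) :
    (p * (C c + X)).coeff (j + 1) = p.coeff (j + 1) * c + p.coeff j := by
  rw [mul_add, coeff_add, coeff_mul_X, coeff_mul_C]

variable (a) in
/-- `Z ^ n ∏_{k < n} (1 + a^(2k+1) Z) (1 + a^(2k+1) Z⁻¹)`. -/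
noncomputable def jacobiPoly (n : ℕ) : R[X] :=
  ∏ k ∈ range n, (1 + C (a ^ (2 * k + 1)) * X) * (C (a ^ (2 * k + 1)) + X)

theorem coeff_mul_one_add_of_coeff {n : ℕ} {p : R[X]}
    (hp : ∀ j, p.coeff j = qBinomial (a ^ 2) (2 * n) j * a ^ sqDist n j) (j : ℕ) :
    (p * (1 + C (a ^ (2 * n + 1)) * X)).coeff j =
      qBinomial (a ^ 2) (2 * n + 1) j * a ^ sqDist n j := by
  rcases j with _ | j
  · simp [hp]
  rw [coeff_mul_one_add_C_mul_X_succ, hp, hp, qBinomial_succ_succ']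
  rcases lt_or_ge (2 * n) j with h | h
  · simp [qBinomial_eq_zero_of_lt _ h]
  have hexp : a ^ sqDist n j * a ^ (2 * n + 1) =
      (a ^ 2) ^ (2 * n - j) * a ^ sqDist n (j + 1) := by
    rw [← pow_mul, ← pow_add, ← pow_add]
    congr 1
    zify [h]
    ring
  linear_combination qBinomial (a ^ 2) (2 * n) j * hexp

theorem coeff_mul_C_add_X_of_coeff {n : ℕ} {p : R[X]}
    (hp : ∀ j, p.coeff j = qBinomial (a ^ 2) (2 * n + 1) j * a ^ sqDist n j) (j : ℕ) :
    (p * (C (a ^ (2 * n + 1)) + X)).coeff j =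
      qBinomial (a ^ 2) (2 * (n + 1)) j * a ^ sqDist (n + 1) j := by
  rcases j with _ | j
  · simp only [mul_coeff_zero, coeff_add, coeff_C_zero, coeff_X_zero, add_zero, hp,
      qBinomial_zero_right, one_mul, ← pow_add]
    congr 1
    zify
    ring
  rw [coeff_mul_C_add_X_succ, hp, hp, show 2 * (n + 1) = 2 * n + 1 + 1 by ring,
    qBinomial_succ_succ _ (2 * n + 1) j,
    show sqDist (n + 1) (j + 1) = sqDist n j by zify; ring]
  have hexp : a ^ sqDist n (j + 1) * a ^ (2 * n + 1) =
      (a ^ 2) ^ (j + 1) * a ^ sqDist n j := by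
    rw [← pow_mul, ← pow_add, ← pow_add]
    congr 1
    zify
    ring
  linear_combination qBinomial (a ^ 2) (2 * n + 1) (j + 1) * hexp

theorem coeff_jacobiPoly (n j : ℕ) :
    (jacobiPoly a n).coeff j = qBinomial (a ^ 2) (2 * n) j * a ^ sqDist n j := by
  induction n generalizing j with
  | zero => rcases j with _ | j <;> simp [jacobiPoly, sqDist, coeff_one]
  | succ n ih =>
    rw [jacobiPoly, prod_range_succ, ← jacobiPoly, ← mul_assoc]
    exact coeff_mul_C_add_X_of_coeff (coeff_mul_one_add_of_coeff ih) j

theorem natDegree_jacobiPoly_lt (n : ℕ) : (jacobiPoly a n).natDegree < 2 * n + 1 :=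
  Nat.lt_succ_of_le <| natDegree_le_iff_coeff_eq_zero.2 fun N hN => by
    rw [coeff_jacobiPoly, qBinomial_eq_zero_of_lt _ hN, zero_mul]

variable (a) in
/-- The finite Jacobi triple product at `Z = -1`. -/
theorem sq_prod_one_sub_pow_odd (n : ℕ) :
    (∏ k ∈ range n, (1 - a ^ (2 * k + 1))) ^ 2 =
      ∑ j ∈ range (2 * n + 1),
        (-1) ^ (n + j) * (qBinomial (a ^ 2) (2 * n) j * a ^ sqDist n j) := by
  have heval := eval_eq_sum_range' (natDegree_jacobiPoly_lt (a := a) n) (-1)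
  simp only [coeff_jacobiPoly] at heval
  simp only [jacobiPoly, eval_prod, eval_mul, eval_add, eval_one, eval_C, eval_X] at heval
  have hfactor : ∀ k ∈ range n, (1 + a ^ (2 * k + 1) * -1) * (a ^ (2 * k + 1) + -1) =
      -1 * (1 - a ^ (2 * k + 1)) ^ 2 := fun k _ => by ring
  rw [prod_congr rfl hfactor, prod_mul_distrib, prod_const, card_range, prod_pow] at heval
  calc (∏ k ∈ range n, (1 - a ^ (2 * k + 1))) ^ 2
      = (-1) ^ n * ((-1) ^ n * (∏ k ∈ range n, (1 - a ^ (2 * k + 1))) ^ 2) := by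
        rw [← mul_assoc, ← pow_add, ← two_mul, pow_mul, neg_one_sq, one_pow, one_mul]
    _ = _ := by
        rw [heval, mul_sum]
        exact sum_congr rfl fun j _ => by ring

variable (a) in
theorem sum_range_neg_one_pow_mul_pow_sqDist (n : ℕ) :
    ∑ j ∈ range (2 * n + 1), (-1) ^ (n + j) * a ^ sqDist n j =
      1 + 2 * ∑ i ∈ range n, (-1) ^ (i + 1) * a ^ ((i + 1) ^ 2) := by
  induction n with
  | zero => simp [sqDist]
  | succ n ih =>
    have hinner :
        ∑ j ∈ range (2 * n + 1), (-1) ^ (n + 1 + (j + 1)) * a ^ sqDist (n + 1) (j + 1) =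
          ∑ j ∈ range (2 * n + 1), (-1) ^ (n + j) * a ^ sqDist n j :=
      sum_congr rfl fun j _ => by
        rw [show n + 1 + (j + 1) = n + j + 2 by ring, pow_add, neg_one_sq, mul_one,
          show sqDist (n + 1) (j + 1) = sqDist n j by zify; ring]
    have hfirst : sqDist (n + 1) 0 = (n + 1) ^ 2 := by zify; ring
    have hlast : sqDist (n + 1) (2 * n + 1 + 1) = (n + 1) ^ 2 := by zify; ring
    rw [show 2 * (n + 1) + 1 = 2 * n + 1 + 1 + 1 by ring, sum_range_succ _ (2 * n + 1 + 1),
      sum_range_succ' _ (2 * n + 1), hinner, ih, sum_range_succ _ n, hfirst, hlast,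
      show n + 1 + (2 * n + 1 + 1) = n + 1 + 2 * (n + 1) by ring, pow_add _ (n + 1) (2 * (n + 1)),
      pow_mul, neg_one_sq, one_pow]
    ring

end JacobiTripleProduct

theorem neg_one_pow_sq {M : Type*} [Monoid M] [HasDistribNeg M] (k : ℕ) :
    (-1 : M) ^ (k ^ 2) = (-1) ^ k := by
  rw [sq, pow_mul]
  rcases neg_one_pow_eq_or M k with h | h <;> simp [h]

section GaussIdentity

open PowerSeries

theorem phiNeg_smodEq (n : ℕ) :
    phiNeg ≡ 1 + 2 * ∑ i ∈ range n, (-1) ^ (i + 1) * X ^ ((i + 1) ^ 2)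
      [SMOD Ideal.span {X ^ (n + 1)}] := by
  refine smodEq_X_pow_iff.2 fun N hN => ?_
  have hterm : ∀ i, coeff N ((-1 : ℤ⟦X⟧) ^ (i + 1) * X ^ ((i + 1) ^ 2)) =
      if N = (i + 1) ^ 2 then (-1) ^ (i + 1) else 0 := fun i => by
    rw [show (-1 : ℤ⟦X⟧) ^ (i + 1) = C ((-1) ^ (i + 1)) by simp, coeff_C_mul_X_pow]
  rw [phiNeg, coeff_mk, map_add, coeff_ofNat_mul, map_sum, coeff_one]
  simp only [hterm]
  rcases eq_or_ne N 0 with rfl | hN0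
  · simp [sum_eq_zero fun (i : ℕ) _ => if_neg (pow_pos i.succ_pos 2).ne]
  simp only [if_neg hN0, zero_add]
  by_cases hsq : ∃ k, 0 < k ∧ N = k ^ 2
  · obtain ⟨k, hk, rfl⟩ := hsq
    have hkn : k - 1 ∈ range n :=
      mem_range.2 (by have := Nat.le_self_pow two_ne_zero k; omega)
    rw [if_pos ⟨k, hk, rfl⟩, sum_eq_single_of_mem _ hkn, Nat.sub_add_cancel hk, if_pos rfl,
      neg_one_pow_sq]
    intro i _ hi
    exact if_neg fun h => hi (by have := Nat.pow_left_injective two_ne_zero h; omega)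
  · rw [if_neg hsq, sum_eq_zero fun i _ => if_neg fun h => hsq ⟨i + 1, i.succ_pos, h⟩,
      mul_zero]

theorem qBinomial_mul_fr_smodEq_one {r : ℕ} (hr : 0 < r) {m j s : ℕ} (hsj : s ≤ r * (j + 1))
    (hsm : s ≤ r * (m + 1)) :
    qBinomial (X ^ r) (m + j) j * fr r ≡ 1 [SMOD Ideal.span {X ^ s}] := by
  have hfr : fr r ≡ _ [SMOD Ideal.span {X ^ s}] :=
    (seriesProd_smodEq_prod (convergentFactors_fr hr) (j + s)).of_X_pow_le (Nat.le_add_left s j)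
  rw [prod_range_add] at hfr
  have hhead :
      qBinomial (X ^ r) (m + j) j * ∏ k ∈ range j, (1 - X ^ (r * (k + 1)) : ℤ⟦X⟧) ≡ 1
        [SMOD Ideal.span {X ^ s}] := by
    simp only [pow_mul, qBinomial_add_mul_prod]
    simp only [← pow_mul]
    exact prod_one_sub_X_pow_smodEq_one fun i _ => hsm.trans (Nat.mul_le_mul_left r (by omega))
  have htail : ∏ k ∈ range s, (1 - X ^ (r * (j + k + 1)) : ℤ⟦X⟧) ≡ 1
      [SMOD Ideal.span {X ^ s}] :=
    prod_one_sub_X_pow_smodEq_one fun k _ => hsj.trans (Nat.mul_le_mul_left r (by omega))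
  have h := (SModEq.refl (qBinomial (X ^ r) (m + j) j)).mul hfr
  rw [← mul_assoc] at h
  simpa using h.trans (hhead.mul htail)

theorem X_pow_sqDist_mul_qBinomial_mul_fr_two_smodEq {n j : ℕ} (hj : j ≤ 2 * n) :
    X ^ sqDist n j * (qBinomial (X ^ 2) (2 * n) j * fr 2) ≡ X ^ sqDist n j
      [SMOD Ideal.span {X ^ n}] := by
  rw [show 2 * n = (2 * n - j) + j by omega]
  refine (X_pow_mul_smodEq (qBinomial_mul_fr_smodEq_one two_pos (s := n - sqDist n j) ?_ ?_)
    _).of_X_pow_le (by omega)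
  · rw [Nat.sub_le_iff_le_add]
    zify
    nlinarith [sq_nonneg ((j : ℤ) - n + 1)]
  · rw [Nat.sub_le_iff_le_add]
    zify [hj]
    nlinarith [sq_nonneg ((j : ℤ) - n - 1)]

noncomputable def oddProd : ℤ⟦X⟧ := seriesProd fun k => 1 - X ^ (2 * k + 1)

/-- Gauss's identity `φ(-q) = (q; q²)_∞² (q²; q²)_∞`. -/
theorem oddProd_sq_mul_fr_two : oddProd ^ 2 * fr 2 = phiNeg := by
  refine eq_of_forall_smodEq_X_pow fun n => ?_
  have htrunc : oddProd ^ 2 * fr 2 ≡ (∏ k ∈ range n, (1 - X ^ (2 * k + 1))) ^ 2 * fr 2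
      [SMOD Ideal.span {X ^ n}] :=
    ((seriesProd_smodEq_prod (ConvergentFactors.one_sub_X_pow fun k => by omega) n).pow 2).mul
      SModEq.rfl
  rw [sq_prod_one_sub_pow_odd, sum_mul] at htrunc
  have hterms : ∑ j ∈ range (2 * n + 1),
      (-1) ^ (n + j) * (qBinomial (X ^ 2) (2 * n) j * X ^ sqDist n j) * fr 2 ≡
        ∑ j ∈ range (2 * n + 1), (-1) ^ (n + j) * X ^ sqDist n j [SMOD Ideal.span {X ^ n}] :=
    SModEq.sum fun j hj => by
      rw [mul_assoc, mul_right_comm, mul_comm _ (X ^ _)]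
      exact SModEq.rfl.mul
        (X_pow_sqDist_mul_qBinomial_mul_fr_two_smodEq (by simp at hj; omega))
  rw [sum_range_neg_one_pow_mul_pow_sqDist] at hterms
  exact htrunc.trans (hterms.trans ((phiNeg_smodEq n).of_X_pow_le n.le_succ).symm)

theorem fr_one_eq_oddProd_mul_fr_two : fr 1 = oddProd * fr 2 := by
  rw [oddProd, fr, fr, seriesProd_mul (ConvergentFactors.one_sub_X_pow fun k => by omega)
    (convergentFactors_fr two_pos), ← seriesProd_pair (convergentFactors_fr one_pos)]
  congr 1 with k : 1
  ring

theorem phiNeg_mul_fr_two : phiNeg * fr 2 = fr 1 ^ 2 := by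
  rw [← oddProd_sq_mul_fr_two, fr_one_eq_oddProd_mul_fr_two]
  ring

end GaussIdentity

section Overpartitions

open PowerSeries

theorem convergentFactors_overGF (t : ℕ) :
    ConvergentFactors fun k =>
      (1 - X ^ (2 * (k + 1)) : ℤ⟦X⟧) ^ t * invOfUnit (1 - X ^ (k + 1)) 1 ^ (2 * t) := by
  intro k
  have h := ((one_sub_X_pow_smodEq_one (R := ℤ) (m := k + 1) (e := 2 * (k + 1))
    (by omega)).pow t).mul
    ((invOfUnit_one_sub_X_pow_smodEq_one (R := ℤ) k.succ_ne_zero).pow (2 * t))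
  rwa [one_pow, one_pow, one_mul] at h

theorem overGF_eq_pow (t : ℕ) : overGF t = overGF 1 ^ t := by
  rw [overGF, overGF, seriesProd_pow (convergentFactors_overGF 1)]
  congr 1 with k : 1
  rw [mul_pow, pow_one, ← pow_mul, mul_one]

theorem overGF_one_mul_fr_one_sq : overGF 1 * fr 1 ^ 2 = fr 2 := by
  rw [overGF, fr, seriesProd_pow (convergentFactors_fr one_pos),
    seriesProd_mul (convergentFactors_overGF 1) ((convergentFactors_fr one_pos).pow 2), fr]
  congr 1 with k : 1
  linear_combination (1 - X ^ (2 * (k + 1)) : ℤ⟦X⟧) *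
      ((1 - X ^ (k + 1)) * invOfUnit (1 - X ^ (k + 1)) 1 + 1) *
      one_sub_X_pow_mul_invOfUnit (R := ℤ) (e := k + 1) k.succ_ne_zero

theorem overGF_one_mul_phiNeg : overGF 1 * phiNeg = 1 := by
  have hfr : fr 2 ≠ 0 := fun h => by simpa [fr, seriesProd] using congrArg (coeff 0) h
  refine mul_right_cancel₀ hfr ?_
  rw [mul_assoc, phiNeg_mul_fr_two, overGF_one_mul_fr_one_sq, one_mul]

end Overpartitions

section ModEight

open PowerSeries

theorem two_dvd_coeff_sq_of_odd {R : Type*} [CommSemiring R] (f : R⟦X⟧) {N : ℕ} (hN : Odd N) :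
    (2 : R) ∣ coeff N (f ^ 2) := by
  set upper : ℕ × ℕ → R := fun p => if p.1 < p.2 then coeff p.1 f * coeff p.2 f else 0
  have hsplit : ∀ p ∈ antidiagonal N, coeff p.1 f * coeff p.2 f = upper p + upper p.swap := by
    intro p hp
    rw [HasAntidiagonal.mem_antidiagonal] at hp
    rcases lt_trichotomy p.1 p.2 with hlt | heq | hgt
    · simp [upper, hlt, hlt.not_gt]
    · exact absurd ⟨p.1, by omega⟩ (Nat.not_even_iff_odd.2 hN)
    · simp [upper, hgt, hgt.not_gt, mul_comm]
  rw [sq, coeff_mul, sum_congr rfl hsplit, sum_add_distrib, Nat.sum_antidiagonal_swap]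
  exact ⟨_, (two_mul _).symm⟩

variable {S : Type*} [CommRing S]

theorem one_add_four_mul_pow (h8 : (8 : S) = 0) (d : S) (s : ℕ) :
    (1 + 4 * d) ^ s = 1 + 4 * (s • d) := by
  induction s with
  | zero => simp
  | succ s ih =>
    rw [pow_succ, ih, succ_nsmul, nsmul_eq_mul]
    linear_combination (2 * s * d ^ 2) * h8

theorem pow_two_mul_add_one_of_mul_one_add_two_mul (h8 : (8 : S) = 0) {g b : S}
    (h : g * (1 + 2 * b) = 1) (s : ℕ) :
    g ^ (2 * s + 1) = 1 - 2 * b + 4 * ((s + 1) • b ^ 2 - s • b) := by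
  have hg : g = 1 - 2 * b + 4 * b ^ 2 := by
    linear_combination (1 - 2 * b + 4 * b ^ 2) * h - b ^ 3 * g * h8
  have hsq : g ^ 2 = 1 + 4 * (b ^ 2 - b) := by
    rw [hg]
    linear_combination (b ^ 2 - 2 * b ^ 3 + 2 * b ^ 4) * h8
  rw [pow_succ, pow_mul, hsq, one_add_four_mul_pow h8, hg]
  simp only [nsmul_eq_mul]
  push_cast
  linear_combination (s * (b ^ 2 - b) * (2 * b ^ 2 - b)) * h8

theorem eight_dvd_coeff_pow_of_mul_one_add_two_mul {G B : ℤ⟦X⟧} (h : G * (1 + 2 * B) = 1)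
    {t N : ℕ} (ht : Odd t) (hN : Odd N) (hB : coeff N B = 0) : (8 : ℤ) ∣ coeff N (G ^ t) := by
  obtain ⟨s, rfl⟩ := ht
  obtain ⟨y, hy⟩ := two_dvd_coeff_sq_of_odd B hN
  have h8 : (8 : ZMod 8) = 0 := rfl
  have hmap := congrArg (map (Int.castRingHom (ZMod 8))) h
  rw [map_mul, map_add, map_one, map_mul, map_ofNat] at hmap
  have key := congrArg (coeff N) (pow_two_mul_add_one_of_mul_one_add_two_mul
    (by rw [← map_ofNat C 8, h8, map_zero]) hmap s)
  rw [← map_pow, coeff_map] at key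
  refine (ZMod.intCast_zmod_eq_zero_iff_dvd _ 8).1 ?_
  rw [← eq_intCast (Int.castRingHom (ZMod 8)), key, map_add, map_sub, coeff_ofNat_mul,
    coeff_ofNat_mul, map_sub, map_nsmul, map_nsmul, ← map_pow, coeff_map, coeff_map, hB, hy,
    coeff_one, if_neg hN.pos.ne', map_zero, map_mul, map_ofNat, nsmul_eq_mul, nsmul_eq_mul]
  linear_combination ((s + 1 : ℕ) * Int.castRingHom (ZMod 8) y) * h8

theorem exists_phiNeg_eq_one_add_two_mul :
    ∃ B : ℤ⟦X⟧, phiNeg = 1 + 2 * B ∧ ∀ N, (∀ k, N ≠ k ^ 2) → coeff N B = 0 := by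
  refine ⟨mk fun N => if ∃ k, 0 < k ∧ N = k ^ 2 then (-1) ^ N else 0, ?_, fun N hN => ?_⟩
  · ext N
    rw [phiNeg, map_add, coeff_ofNat_mul, coeff_one, coeff_mk, coeff_mk]
    rcases eq_or_ne N 0 with rfl | hN0
    · simpa using fun k (hk : 0 < k) => (pow_pos hk 2).ne
    · simp only [if_neg hN0]
      split_ifs <;> ring
  · rw [coeff_mk, if_neg fun ⟨k, _, hk⟩ => hN k hk]

theorem eight_mul_add_five_ne_sq (n k : ℕ) : 8 * n + 5 ≠ k ^ 2 := by
  intro h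
  have hcast := congrArg (fun m : ℕ => (m : ZMod 8)) h
  have h8 : (8 : ZMod 8) = 0 := rfl
  push_cast [h8, zero_mul, zero_add] at hcast
  generalize (k : ZMod 8) = x at hcast
  revert x
  decide

end ModEight

theorem pbar_eight_n_add_5_general (t : ℕ) (ht : Odd t) (n : ℕ) :
    (8 : ℤ) ∣ pbar t (8 * n + 5) := by
  obtain ⟨B, hphi, hB⟩ := exists_phiNeg_eq_one_add_two_mul
  rw [pbar, overGF_eq_pow]
  exact eight_dvd_coeff_pow_of_mul_one_add_two_mul (hphi ▸ overGF_one_mul_phiNeg) ht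
    ⟨4 * n + 2, by ring⟩ (hB _ (eight_mul_add_five_ne_sq n))

/-- For all `n ≥ 0` and all odd `t ≥ 1`, `p̄_{-t}(8n+5) ≡ 0 (mod 8)`. -/
theorem pbar_eight_n_add_5 (t : ℕ) (ht1 : 1 ≤ t) (ht : Odd t) (n : ℕ) :
    (8 : ℤ) ∣ pbar t (8 * n + 5) :=
  pbar_eight_n_add_5_general t ht n
end

section
/- For all odd integers t ≥ 1 and all integers n ≥ 0, the coefficient of q^{8n+2} in the formal power series ( φ(q)·φ(q²)²·φ(q⁴)⁴ )^t over ℤ is divisible by 4. -/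
/-!
Write `φ(q^m) = 1 + 2 T_m`. Then `φ(q^m)² = 1 + 4(T_m + T_m²) ≡ 1 (mod 4)`, so modulo 4 the
product `φ(q) φ(q²)² φ(q⁴)⁴` is `φ(q)`, and so are its odd powers. The coefficient of
`q^{8n+2}` in `φ(q)` vanishes because `8n + 2 ≡ 2 (mod 4)` is never a square.
-/

open scoped Classical

noncomputable def phiTail (m : ℕ) : PowerSeries ℤ :=
  PowerSeries.mk fun n =>
    if n = 0 then 0 else if ∃ k : ℕ, 0 < k ∧ n = m * k ^ 2 then 1 else 0

theorem phi_eq_one_add_two_mul_phiTail (m : ℕ) : phi m = 1 + 2 * phiTail m := by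
  ext n
  rw [map_add, ← map_ofNat PowerSeries.C 2, PowerSeries.coeff_C_mul]
  simp only [phi, phiTail, PowerSeries.coeff_mk, PowerSeries.coeff_one]
  split_ifs <;> ring

theorem four_dvd_phi_sq_sub_one (m : ℕ) : (4 : PowerSeries ℤ) ∣ phi m ^ 2 - 1 :=
  ⟨phiTail m + phiTail m ^ 2, by rw [phi_eq_one_add_two_mul_phiTail]; ring⟩

theorem coeff_phi_eq_zero {m n : ℕ} (hn : n ≠ 0) (h : ∀ k, n ≠ m * k ^ 2) :
    PowerSeries.coeff n (phi m) = 0 := by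
  simp only [phi, PowerSeries.coeff_mk, if_neg hn]
  exact if_neg fun ⟨k, _, hk⟩ => h k hk

theorem eight_mul_add_two_ne_sq (n k : ℕ) : 8 * n + 2 ≠ k ^ 2 := by
  intro h
  have hk : (k : ℤ) * k = 8 * n + 2 := by rw [← sq]; exact_mod_cast h.symm
  exact Int.sq_ne_two_mod_four k (by omega)

theorem coeff_phi_one_eight_mul_add_two (n : ℕ) :
    PowerSeries.coeff (8 * n + 2) (phi 1) = 0 :=
  coeff_phi_eq_zero (by omega) fun k => by simpa using eight_mul_add_two_ne_sq n k

theorem PowerSeries.dvd_coeff_of_C_dvd {R : Type*} [CommSemiring R] {c : R} {f : PowerSeries R}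
    (h : C c ∣ f) (n : ℕ) : c ∣ coeff n f := by
  obtain ⟨g, rfl⟩ := h
  rw [coeff_C_mul]
  exact dvd_mul_right c _

section

variable {R : Type*} [CommRing R] {a x : R}

theorem dvd_pow_sub_self_of_dvd_sq_sub_one (hx : a ∣ x ^ 2 - 1) {t : ℕ} (ht : Odd t) :
    a ∣ x ^ t - x := by
  obtain ⟨m, rfl⟩ := ht
  have hpow : a ∣ (x ^ 2) ^ m - 1 ^ m := hx.trans (sub_dvd_pow_sub_pow _ _ m)
  have hfactor : x ^ (2 * m + 1) - x = x * ((x ^ 2) ^ m - 1 ^ m) := by ring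
  exact hfactor ▸ hpow.mul_left x

theorem dvd_mul_sq_mul_pow_four_pow_sub {u v : R} (hx : a ∣ x ^ 2 - 1) (hu : a ∣ u ^ 2 - 1)
    (hv : a ∣ v ^ 2 - 1) {t : ℕ} (ht : Odd t) : a ∣ (x * u ^ 2 * v ^ 4) ^ t - x := by
  have hprod : a ∣ x * u ^ 2 * v ^ 4 - x := by
    have hsplit : x * u ^ 2 * v ^ 4 - x =
        x * ((u ^ 2 - 1) * v ^ 4 + (v ^ 2 - 1) * (v ^ 2 + 1)) := by ring
    exact hsplit ▸ ((hu.mul_right _).add (hv.mul_right _)).mul_left x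
  have hpow : a ∣ (x * u ^ 2 * v ^ 4) ^ t - x ^ t := hprod.trans (sub_dvd_pow_sub_pow _ _ t)
  simpa using hpow.add (dvd_pow_sub_self_of_dvd_sq_sub_one hx ht)

end

theorem coeff_phi_prod_pow_2_general (t : ℕ) (ht : Odd t) (n : ℕ) :
    (4 : ℤ) ∣ PowerSeries.coeff (8 * n + 2) ((phi 1 * phi 2 ^ 2 * phi 4 ^ 4) ^ t) := by
  have hdvd : PowerSeries.C (4 : ℤ) ∣ (phi 1 * phi 2 ^ 2 * phi 4 ^ 4) ^ t - phi 1 := by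
    rw [map_ofNat]
    exact dvd_mul_sq_mul_pow_four_pow_sub (four_dvd_phi_sq_sub_one 1)
      (four_dvd_phi_sq_sub_one 2) (four_dvd_phi_sq_sub_one 4) ht
  simpa [coeff_phi_one_eight_mul_add_two] using PowerSeries.dvd_coeff_of_C_dvd hdvd (8 * n + 2)

/-- For all odd `t ≥ 1` and all `n ≥ 0`, the coefficient of `q^(8n+2)` in
`(φ(q)·φ(q²)²·φ(q⁴)⁴)^t` is divisible by 4. -/
theorem coeff_phi_prod_pow_2 (t : ℕ) (ht1 : 1 ≤ t) (ht : Odd t) (n : ℕ) :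
    (4 : ℤ) ∣ PowerSeries.coeff (8 * n + 2) ((phi 1 * phi 2 ^ 2 * phi 4 ^ 4) ^ t) :=
  coeff_phi_prod_pow_2_general t ht n
end

section
/- For all odd integers t ≥ 1 and all integers n ≥ 0, the coefficient of q^{8n+3} in the formal power series ( φ(q)·φ(q²)²·φ(q⁴)⁴ )^t over ℤ is divisible by 8. -/
open scoped Classical

/-!
Reduce modulo 8. There `φ(q^m) = 1 + 2 A_m` with `A_m = ∑_{k ≥ 1} q^{m k²}` (`thetaTail`), and
`(1 + 2x)⁴ = 1`, so the product becomes `(1 + y)^t` with `y = 2 A_1 + 4 (A_2 + A_2²)`.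
Since `y² = 4 A_1²` and `y³ = 0`, the binomial theorem leaves `1 + t y + C(t,2) · 4 A_1²`.
No square, and no sum of two squares, is `3 mod 8`, and `A_2` lives on even exponents, so
each of these terms has zero coefficient at `q^{8n+3}`.
-/

open PowerSeries

theorem Nat.sq_add_sq_mod_eight_ne_three (i j : ℕ) : (i ^ 2 + j ^ 2) % 8 ≠ 3 := by
  rw [Nat.add_mod, Nat.pow_mod, Nat.pow_mod j]
  have key : ∀ x < 8, ∀ y < 8, (x ^ 2 % 8 + y ^ 2 % 8) % 8 ≠ 3 := by decide
  exact key _ (Nat.mod_lt _ (by norm_num)) _ (Nat.mod_lt _ (by norm_num))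

theorem PowerSeries.coeff_mul_eq_zero_of_forall_add_eq {R : Type*} [Semiring R]
    {f g : R⟦X⟧} {n : ℕ} (h : ∀ i j, i + j = n → coeff i f = 0 ∨ coeff j g = 0) :
    coeff n (f * g) = 0 := by
  rw [coeff_mul]
  refine Finset.sum_eq_zero fun ⟨i, j⟩ hij => ?_
  rcases h i j (Finset.HasAntidiagonal.mem_antidiagonal.mp hij) with h | h <;> simp [h]

theorem one_add_two_mul_pow_four {R : Type*} [CommRing R] (h8 : (8 : R) = 0) (x : R) :
    (1 + 2 * x) ^ 4 = 1 := by
  linear_combination (x + 3 * x ^ 2 + 4 * x ^ 3 + 2 * x ^ 4) * h8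

theorem one_add_pow_of_pow_three_eq_zero {R : Type*} [CommRing R] {y : R} (hy : y ^ 3 = 0)
    (t : ℕ) : (1 + y) ^ t = 1 + t * y + t.choose 2 * y ^ 2 := by
  induction t with
  | zero => simp
  | succ t ih =>
    rw [pow_succ, ih, Nat.choose_succ_succ, Nat.choose_one_right]
    push_cast
    linear_combination (t.choose 2 : R) * hy

theorem one_add_two_mul_prod_pow_of_eight_eq_zero {R : Type*} [CommRing R] (h8 : (8 : R) = 0)
    (a b c : R) (t : ℕ) :
    ((1 + 2 * a) * (1 + 2 * b) ^ 2 * (1 + 2 * c) ^ 4) ^ t =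
      1 + t * (2 * a + 4 * (b + b ^ 2)) + t.choose 2 * (4 * a ^ 2) := by
  have hcube : (2 * a + 4 * (b + b ^ 2)) ^ 3 = 0 := by
    linear_combination (a + 2 * (b + b ^ 2)) ^ 3 * h8
  have hprod : (1 + 2 * a) * (1 + 2 * b) ^ 2 = 1 + (2 * a + 4 * (b + b ^ 2)) := by
    linear_combination (a * b + a * b ^ 2) * h8
  rw [one_add_two_mul_pow_four h8, mul_one, hprod, one_add_pow_of_pow_three_eq_zero hcube]
  linear_combination (t.choose 2 : R) * (2 * a * (b + b ^ 2) + 2 * (b + b ^ 2) ^ 2) * h8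

noncomputable def thetaTail (R : Type*) [Semiring R] (m : ℕ) : R⟦X⟧ :=
  mk fun n => if ∃ k : ℕ, 0 < k ∧ n = m * k ^ 2 then 1 else 0

theorem map_phi {R : Type*} [Ring R] {m : ℕ} (hm : 0 < m) :
    map (Int.castRingHom R) (phi m) = 1 + 2 * thetaTail R m := by
  ext n
  rw [← map_ofNat C 2, map_add, coeff_C_mul, coeff_one, coeff_map]
  rcases eq_or_ne n 0 with rfl | hn
  · simp [phi, thetaTail, hm.ne']
  · simp [phi, thetaTail, hn]

section thetaTail

variable {R : Type*} [Semiring R]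

theorem coeff_thetaTail_eq_zero {m n : ℕ} (h : ∀ k, n ≠ m * k ^ 2) :
    coeff n (thetaTail R m) = 0 := by
  simp [thetaTail, h]

theorem coeff_thetaTail_one_eq_zero {n : ℕ} (hn : n % 8 = 3) :
    coeff n (thetaTail R 1) = 0 :=
  coeff_thetaTail_eq_zero fun k hk => Nat.sq_add_sq_mod_eight_ne_three k 0
    (by rw [zero_pow two_ne_zero, add_zero, ← one_mul (k ^ 2), ← hk, hn])

theorem coeff_thetaTail_one_sq_eq_zero {n : ℕ} (hn : n % 8 = 3) :
    coeff n (thetaTail R 1 ^ 2) = 0 := by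
  refine sq (thetaTail R 1) ▸ coeff_mul_eq_zero_of_forall_add_eq fun i j hij => ?_
  by_cases hi : ∃ k, i = k ^ 2
  · obtain ⟨k, rfl⟩ := hi
    exact .inr <| coeff_thetaTail_eq_zero fun l hl =>
      Nat.sq_add_sq_mod_eight_ne_three k l (by rw [← one_mul (l ^ 2), ← hl, hij, hn])
  · exact .inl <| coeff_thetaTail_eq_zero fun k hk => hi ⟨k, by simpa using hk⟩

theorem coeff_thetaTail_eq_zero_of_even {m n : ℕ} (hm : Even m) (hn : Odd n) :
    coeff n (thetaTail R m) = 0 :=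
  coeff_thetaTail_eq_zero fun _ hk => Nat.not_even_iff_odd.mpr hn (hk ▸ hm.mul_right _)

theorem coeff_thetaTail_sq_eq_zero_of_even {m n : ℕ} (hm : Even m) (hn : Odd n) :
    coeff n (thetaTail R m ^ 2) = 0 := by
  refine sq (thetaTail R m) ▸ coeff_mul_eq_zero_of_forall_add_eq fun i j hij => ?_
  rcases Nat.even_or_odd i with hi | hi
  · exact .inr <| coeff_thetaTail_eq_zero_of_even hm <| (Nat.odd_add'.mp (hij ▸ hn)).mpr hi
  · exact .inl <| coeff_thetaTail_eq_zero_of_even hm hi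

end thetaTail

theorem coeff_phi_prod_pow_3_general (t : ℕ) (n : ℕ) :
    (8 : ℤ) ∣ PowerSeries.coeff (8 * n + 3) ((phi 1 * phi 2 ^ 2 * phi 4 ^ 4) ^ t) := by
  have h8 : (8 : (ZMod 8)⟦X⟧) = 0 := by
    rw [← map_ofNat C 8, show (8 : ZMod 8) = 0 from rfl, map_zero]
  have hmod : (8 * n + 3) % 8 = 3 := by omega
  have hodd : Odd (8 * n + 3) := ⟨4 * n + 1, by ring⟩
  refine (ZMod.intCast_zmod_eq_zero_iff_dvd _ 8).mp ?_
  rw [← eq_intCast (Int.castRingHom _), ← coeff_map]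
  simp only [map_pow, map_mul, map_phi one_pos, map_phi two_pos, map_phi four_pos,
    one_add_two_mul_prod_pow_of_eight_eq_zero h8]
  simp only [← map_natCast C, ← map_ofNat C, map_add, coeff_C_mul, coeff_one,
    coeff_thetaTail_one_eq_zero hmod, coeff_thetaTail_one_sq_eq_zero hmod,
    coeff_thetaTail_eq_zero_of_even even_two hodd, coeff_thetaTail_sq_eq_zero_of_even even_two hodd]
  simp

/-- For all odd `t ≥ 1` and all `n ≥ 0`, the coefficient of `q^(8n+3)` in
`(φ(q)·φ(q²)²·φ(q⁴)⁴)^t` is divisible by 8. -/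
theorem coeff_phi_prod_pow_3 (t : ℕ) (ht1 : 1 ≤ t) (ht : Odd t) (n : ℕ) :
    (8 : ℤ) ∣ PowerSeries.coeff (8 * n + 3) ((phi 1 * phi 2 ^ 2 * phi 4 ^ 4) ^ t) :=
  coeff_phi_prod_pow_3_general t n
end
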